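/- arXiv:1310.0304 — 3 statements merged into one kernel-verified Lean document; each statement's English description precedes it below -/
import Mathlib

section
/- Let (X, υ) be a compact metric measure space such that X is a geodesic space, (X, υ) satisfies the doubling condition for some κ > 0, and (X, υ) satisfies the segment inequality for some λ > 0. Then for every Lipschitz function f on X, the global Lipschitz constant sup_{a ≠ b} |f(a) − f(b)|/d(a,b) equals the υ-essential supremum of the pointwise Lipschitz constant Lip f. -/
open MeasureTheory Metric Filter Set
open scoped Topology NNReal ENNReal
open Classical

variable {X : Type*} [MetricSpace X]

/-- A real-valued function is Lipschitz (with some constant). -/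
def IsLipFun (f : X → ℝ) : Prop := ∃ K : ℝ≥0, LipschitzWith K f

/-- The pointwise Lipschitz constant `Lip f (x)`:
`0` if `x` is isolated, and otherwise the limit (= infimum, by monotonicity)
as `r → 0` of `sup_{y ∈ B_r(x), y ≠ x} |f x - f y| / dist x y`. -/
noncomputable def pLip (f : X → ℝ) (x : X) : ℝ :=
  if 𝓝[≠] x = ⊥ then 0
  else ⨅ r : Ioi (0:ℝ), sSup ((fun y => |f x - f y| / dist x y) '' (ball x r.1 \ {x}))

/-- `γ` is a (unit-speed) minimal geodesic from `x` to `y`. -/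
def IsMinGeodesic (γ : ℝ → X) (x y : X) : Prop :=
  γ 0 = x ∧ γ (dist x y) = y ∧
    ∀ s ∈ Icc (0:ℝ) (dist x y), ∀ t ∈ Icc (0:ℝ) (dist x y), dist (γ s) (γ t) = |s - t|

/-- A metric space is geodesic if any two points are joined by a minimal geodesic. -/
def IsGeodesicSpace (Y : Type*) [MetricSpace Y] : Prop :=
  ∀ x y : Y, ∃ γ : ℝ → Y, IsMinGeodesic γ x y

section MeasureDefs
variable [MeasurableSpace X] (υ : Measure X)

/-- The doubling condition for `κ`. -/
def DoublingFor (κ : ℝ) : Prop :=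
  ∀ x : X, ∀ r : ℝ, 0 < r → υ (ball x (2*r)) ≤ (2:ℝ≥0∞) ^ κ * υ (ball x r)

/-- The `(q,p)`-Poincaré inequality for `τ` (for Lipschitz functions). -/
def PoincareFor (q p τ : ℝ) : Prop :=
  ∀ x : X, ∀ r : ℝ, 0 < r → ∀ f : X → ℝ, IsLipFun f →
    (⨍ y in ball x r, |f y - ⨍ z in ball x r, f z ∂υ| ^ q ∂υ) ^ (1/q) ≤
      τ * r * ((⨍ y in ball x r, (pLip f y) ^ p ∂υ) ^ (1/p))

/-- `F_g(x,y)`: the infimum over minimal geodesics `γ` from `x` to `y` of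
`∫_0^{d(x,y)} g(γ(s)) ds`. -/
noncomputable def segF (g : X → ℝ≥0∞) (x y : X) : ℝ≥0∞ :=
  ⨅ γ ∈ {γ : ℝ → X | IsMinGeodesic γ x y}, ∫⁻ s in Icc (0:ℝ) (dist x y), g (γ s)

/-- The segment inequality for `lam`. -/
def SegmentIneqFor (lam : ℝ) : Prop :=
  ∀ x : X, ∀ r : ℝ, 0 < r → ∀ g : X → ℝ≥0∞, Measurable g →
    (∫⁻ pr in (ball x r) ×ˢ (ball x r), segF g pr.1 pr.2 ∂(υ.prod υ)) ≤
      ENNReal.ofReal (lam * r) * υ (ball x r) * ∫⁻ z in ball x (3*r), g z ∂υ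

/-- The first eigenvalue of the `p`-Laplacian (`∞` if there is no competitor). -/
noncomputable def lambda1 (p : ℝ) : ℝ≥0∞ :=
  ⨅ f ∈ {f : X → ℝ | IsLipFun f ∧ (∫ x, |f x| ^ p ∂υ) = 1 ∧
      (∫ x, |f x| ^ (p-2) * f x ∂υ) = 0},
    ENNReal.ofReal (∫ x, (pLip f x) ^ p ∂υ)

/-- Minkowski's exterior boundary measure
`υ⁺(A) = liminf_{r → 0+} (υ(B_r(A)) - υ(A))/r`. -/
noncomputable def minkBoundary (A : Set X) : ℝ≥0∞ :=
  Filter.liminf (fun r : ℝ => (υ (thickening r A) - υ A) / ENNReal.ofReal r) (𝓝[>] (0:ℝ))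

/-- The Cheeger constant (`∞` if there is no competitor). -/
noncomputable def cheeger : ℝ≥0∞ :=
  ⨅ A ∈ {A : Set X | MeasurableSet A ∧ 0 < υ A ∧ υ A ≤ 1/2}, minkBoundary υ A / υ A

/-- `λ_{1,p}` for `p ∈ [1, ∞)`, with `λ_{1,1} := h(X)` the Cheeger constant. -/
noncomputable def lam1 (p : ℝ) : ℝ≥0∞ := if p = 1 then cheeger υ else lambda1 υ p

/-- `c_p(f) = inf_{c ∈ ℝ} (∫ |f - c|^p dυ)^{1/p}`. -/
noncomputable def cP (p : ℝ) (f : X → ℝ) : ℝ :=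
  ⨅ c : ℝ, (∫ x, |f x - c| ^ p ∂υ) ^ (1/p)

/-- `M` is a median of `f`. -/
def IsMedian (f : X → ℝ) (M : ℝ) : Prop :=
  (1/2 : ℝ≥0∞) ≤ υ {x | M ≤ f x} ∧ (1/2 : ℝ≥0∞) ≤ υ {x | f x ≤ M}

end MeasureDefs

/-- The global Lipschitz constant `sup_{a ≠ b} |f a - f b| / dist a b`. -/
noncomputable def globalLip (f : X → ℝ) : ℝ :=
  sSup {L : ℝ | ∃ a b : X, a ≠ b ∧ L = |f a - f b| / dist a b}

/-!
If `Lip f < M` off a `υ`-null set `E`, apply the segment inequality to `g = ∞ · 1_E` on a ball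
containing all of `X`: the right-hand side vanishes, so `F_g` is finite on almost every pair, i.e.
every set of pairs of positive measure contains a pair `(y, z)` joined by a minimal geodesic `γ`
that spends only a null set of times in `E`. Then `f ∘ γ` is Lipschitz, hence absolutely
continuous, with `|(f ∘ γ)'| ≤ M` almost everywhere, so `|f y - f z| ≤ M d(y, z)`. The pairs
violating this bound form an open set, which would have positive measure because doubling
measures charge every ball. The reverse inequality `Lip f ≤ globalLip f` is pointwise.
-/

section PointwiseLip

variable {f : X → ℝ} {x : X}

theorem pLip_nonneg (f : X → ℝ) (x : X) : 0 ≤ pLip f x := by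
  unfold pLip
  split_ifs
  · exact le_rfl
  · exact Real.iInf_nonneg fun r => Real.sSup_nonneg <| by
      rintro _ ⟨y, -, rfl⟩
      positivity

theorem pLip_le_of_forall_abs_sub_le {L : ℝ} (hL : 0 ≤ L)
    (h : ∀ y, |f x - f y| ≤ L * dist x y) : pLip f x ≤ L := by
  unfold pLip
  split_ifs
  · exact hL
  · refine ciInf_le_of_le ⟨0, ?_⟩ ⟨1, mem_Ioi.2 one_pos⟩ (Real.sSup_le ?_ hL)
    · rintro _ ⟨r, rfl⟩
      exact Real.sSup_nonneg <| by
        rintro _ ⟨y, -, rfl⟩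
        positivity
    · rintro _ ⟨y, -, rfl⟩
      exact div_le_of_le_mul₀ dist_nonneg hL (h y)

theorem pLip_le {K : ℝ≥0} (hf : LipschitzWith K f) (x : X) : pLip f x ≤ K :=
  pLip_le_of_forall_abs_sub_le K.coe_nonneg fun y => by
    simpa only [Real.dist_eq] using hf.dist_le_mul x y

theorem LipschitzWith.eventually_abs_sub_le_of_pLip_lt {K : ℝ≥0} (hf : LipschitzWith K f)
    {M : ℝ} (h : pLip f x < M) : ∀ᶠ y in 𝓝 x, |f x - f y| ≤ M * dist x y := by
  suffices hne : ∀ᶠ y in 𝓝[≠] x, |f x - f y| ≤ M * dist x y by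
    filter_upwards [eventually_nhdsWithin_iff.1 hne] with y hy
    rcases eq_or_ne y x with rfl | hyx
    · simp
    · exact hy hyx
  unfold pLip at h
  split_ifs at h with hx
  · simp [hx]
  obtain ⟨r, hr⟩ := exists_lt_of_ciInf_lt h
  have hbdd : BddAbove ((fun y => |f x - f y| / dist x y) '' (ball x r.1 \ {x})) := by
    refine ⟨K, ?_⟩
    rintro _ ⟨y, -, rfl⟩
    exact div_le_of_le_mul₀ dist_nonneg K.coe_nonneg <| by
      simpa only [Real.dist_eq] using hf.dist_le_mul x y
  filter_upwards [inter_mem_nhdsWithin _ (ball_mem_nhds x r.2)] with y ⟨hyx, hy⟩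
  have hratio := (le_csSup hbdd ⟨y, ⟨hy, hyx⟩, rfl⟩).trans_lt hr
  exact (div_le_iff₀ (dist_pos.2 (Ne.symm hyx))).1 hratio.le

end PointwiseLip

section GlobalLip

variable {f : X → ℝ}

theorem globalLip_le {L : ℝ} (hL : 0 ≤ L) (h : ∀ a b, |f a - f b| ≤ L * dist a b) :
    globalLip f ≤ L := by
  refine Real.sSup_le ?_ hL
  rintro _ ⟨a, b, -, rfl⟩
  exact div_le_of_le_mul₀ dist_nonneg hL (h a b)

theorem LipschitzWith.abs_sub_le_globalLip_mul {K : ℝ≥0} (hf : LipschitzWith K f) (a b : X) :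
    |f a - f b| ≤ globalLip f * dist a b := by
  rcases eq_or_ne a b with rfl | hab
  · simp
  have hbdd : BddAbove {L : ℝ | ∃ a b : X, a ≠ b ∧ L = |f a - f b| / dist a b} := by
    refine ⟨K, ?_⟩
    rintro _ ⟨a, b, -, rfl⟩
    exact div_le_of_le_mul₀ dist_nonneg K.coe_nonneg <| by
      simpa only [Real.dist_eq] using hf.dist_le_mul a b
  exact (div_le_iff₀ (dist_pos.2 hab)).1 (le_csSup hbdd ⟨a, b, hab, rfl⟩)

theorem LipschitzWith.pLip_le_globalLip {K : ℝ≥0} (hf : LipschitzWith K f) (x : X) :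
    pLip f x ≤ globalLip f :=
  pLip_le_of_forall_abs_sub_le
    (Real.sSup_nonneg <| by rintro _ ⟨a, b, -, rfl⟩; positivity)
    (hf.abs_sub_le_globalLip_mul x)

end GlobalLip

theorem abs_sub_le_mul_of_ae_eventually_le {h : ℝ → ℝ} {K : ℝ≥0} {M a b : ℝ} (hab : a ≤ b)
    (hM : 0 ≤ M) (hK : LipschitzOnWith K h (Icc a b))
    (hloc : ∀ᵐ s, s ∈ Ioo a b → ∀ᶠ t in 𝓝 s, |h t - h s| ≤ M * |t - s|) :
    |h b - h a| ≤ M * (b - a) := by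
  have hac := (uIcc_of_le hab ▸ hK).absolutelyContinuousOnInterval
  rw [← hac.integral_deriv_eq_sub, ← Real.norm_eq_abs, ← abs_of_nonneg (sub_nonneg.2 hab)]
  refine intervalIntegral.norm_integral_le_of_norm_le_const_ae ?_
  filter_upwards [hloc, compl_mem_ae_iff.2 (measure_singleton b)] with s hs hsb hsab
  rw [uIoc_of_le hab] at hsab
  exact norm_deriv_le_of_lip' hM (hs ⟨hsab.1, hsab.2.lt_of_ne hsb⟩)

theorem IsMinGeodesic.abs_sub_le_of_null {f : X → ℝ} {K : ℝ≥0} (hf : LipschitzWith K f)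
    {M : ℝ} (hM : 0 ≤ M) {E : Set X} (hE : ∀ x ∉ E, pLip f x < M)
    {γ : ℝ → X} {y z : X} (hγ : IsMinGeodesic γ y z)
    (hnull : volume {s ∈ Icc 0 (dist y z) | γ s ∈ E} = 0) :
    |f y - f z| ≤ M * dist y z := by
  obtain ⟨hγy, hγz, hγdist⟩ := hγ
  have hlip : LipschitzOnWith K (f ∘ γ) (Icc 0 (dist y z)) := by
    refine LipschitzOnWith.of_dist_le_mul fun s hs t ht => ?_
    simpa only [Function.comp, hγdist s hs t ht, Real.dist_eq] using hf.dist_le_mul (γ s) (γ t)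
  have hloc : ∀ᵐ s, s ∈ Ioo 0 (dist y z) →
      ∀ᶠ t in 𝓝 s, |f (γ t) - f (γ s)| ≤ M * |t - s| := by
    filter_upwards [measure_eq_zero_iff_ae_notMem.1 hnull] with s hsE hs
    have hsE : γ s ∉ E := fun h => hsE ⟨Ioo_subset_Icc_self hs, h⟩
    obtain ⟨r, hr, hball⟩ := Metric.eventually_nhds_iff_ball.1
      (hf.eventually_abs_sub_le_of_pLip_lt (hE _ hsE))
    filter_upwards [Ioo_mem_nhds hs.1 hs.2, ball_mem_nhds s hr] with t ht htr
    have hst := hγdist t (Ioo_subset_Icc_self ht) s (Ioo_subset_Icc_self hs)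
    rw [abs_sub_comm, ← hst, dist_comm]
    exact hball _ (by rwa [mem_ball, hst, ← Real.dist_eq])
  have := abs_sub_le_mul_of_ae_eventually_le dist_nonneg hM hlip hloc
  rwa [Function.comp_apply, Function.comp_apply, hγy, hγz, sub_zero, abs_sub_comm] at this

section DoublingSegment

variable [MeasurableSpace X] {υ : Measure X}

theorem measure_ball_two_pow_mul_le {κ : ℝ} (hdoub : DoublingFor υ κ) (x : X) {r : ℝ}
    (hr : 0 < r) (n : ℕ) : υ (ball x (2 ^ n * r)) ≤ ((2 : ℝ≥0∞) ^ κ) ^ n * υ (ball x r) := by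
  induction n with
  | zero => simp
  | succ n ih =>
    calc υ (ball x (2 ^ (n + 1) * r)) = υ (ball x (2 * (2 ^ n * r))) := by ring_nf
      _ ≤ (2 : ℝ≥0∞) ^ κ * υ (ball x (2 ^ n * r)) := hdoub x _ (by positivity)
      _ ≤ (2 : ℝ≥0∞) ^ κ * (((2 : ℝ≥0∞) ^ κ) ^ n * υ (ball x r)) := by gcongr
      _ = ((2 : ℝ≥0∞) ^ κ) ^ (n + 1) * υ (ball x r) := by ring

theorem DoublingFor.isOpenPosMeasure [BoundedSpace X] [NeZero υ] {κ : ℝ}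
    (hdoub : DoublingFor υ κ) : υ.IsOpenPosMeasure := by
  refine ⟨fun U hU ⟨x, hx⟩ hU0 => NeZero.ne υ ?_⟩
  obtain ⟨r, hr, hrU⟩ := Metric.isOpen_iff.1 hU x hx
  obtain ⟨R, hR⟩ := (isBounded_iff_subset_ball x).1 (BoundedSpace.bounded_univ (α := X))
  obtain ⟨n, hn⟩ := pow_unbounded_of_one_lt (R / r) one_lt_two
  have hcover : ball x (2 ^ n * r) = univ :=
    eq_univ_of_univ_subset <| hR.trans <| ball_subset_ball ((div_lt_iff₀ hr).1 hn).le
  rw [← Measure.measure_univ_eq_zero, ← hcover]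
  refine le_antisymm ?_ zero_le
  calc υ (ball x (2 ^ n * r)) ≤ ((2 : ℝ≥0∞) ^ κ) ^ n * υ (ball x r) :=
        measure_ball_two_pow_mul_le hdoub x hr n
    _ = 0 := by rw [measure_mono_null hrU hU0, mul_zero]

theorem SegmentIneqFor.exists_segF_lt_top [BoundedSpace X] {lam : ℝ}
    (hseg : SegmentIneqFor υ lam) {g : X → ℝ≥0∞} (hg : Measurable g) (hg0 : ∫⁻ x, g x ∂υ = 0)
    {W : Set (X × X)} (hW : MeasurableSet W) (hW0 : υ.prod υ W ≠ 0) :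
    ∃ p ∈ W, segF g p.1 p.2 < ⊤ := by
  by_contra! htop
  obtain ⟨⟨x, -⟩, -⟩ := nonempty_of_measure_ne_zero hW0
  obtain ⟨R, hR⟩ := (isBounded_iff_subset_ball x).1 (BoundedSpace.bounded_univ (α := X))
  have hRpos : 0 < R := pos_of_mem_ball (hR (mem_univ x))
  have hcover : ball x R = univ := eq_univ_of_univ_subset hR
  have hupper := hseg x R hRpos g hg
  rw [hcover, univ_prod_univ, Measure.restrict_univ] at hupper
  have hlower : ∞ * υ.prod υ W ≤ ∫⁻ p, segF g p.1 p.2 ∂υ.prod υ := by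
    rw [← setLIntegral_const, ← lintegral_indicator hW]
    exact lintegral_mono fun p => indicator_le htop p
  have hzero : ∫⁻ z in ball x (3 * R), g z ∂υ = 0 :=
    nonpos_iff_eq_zero.1 (hg0 ▸ setLIntegral_le_lintegral _ _)
  rw [hzero, mul_zero] at hupper
  rw [ENNReal.top_mul hW0] at hlower
  exact ENNReal.top_ne_zero (nonpos_iff_eq_zero.1 (hlower.trans hupper))

theorem exists_isMinGeodesic_of_segF_indicator_lt_top [BorelSpace X] {E : Set X}
    (hE : MeasurableSet E) {y z : X} (h : segF (E.indicator fun _ => ∞) y z < ⊤) :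
    ∃ γ, IsMinGeodesic γ y z ∧ volume {s ∈ Icc 0 (dist y z) | γ s ∈ E} = 0 := by
  simp only [segF, iInf_lt_iff] at h
  obtain ⟨γ, hγ, hfin⟩ := h
  refine ⟨γ, hγ, ?_⟩
  have hγcont : ContinuousOn γ (Icc 0 (dist y z)) :=
    (LipschitzOnWith.of_dist_le_mul (K := 1) fun s hs t ht => by
      simp [hγ.2.2 s hs t ht, Real.dist_eq]).continuousOn
  have hmeas := ((measurable_const (a := ∞)).indicator hE).comp_aemeasurable
    (hγcont.aemeasurable (μ := volume) measurableSet_Icc)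
  have hae := ae_lt_top' hmeas hfin.ne
  rw [ae_restrict_iff' measurableSet_Icc] at hae
  rw [measure_eq_zero_iff_ae_notMem]
  filter_upwards [hae] with s hs ⟨hsI, hsE⟩
  exact (hs hsI).ne (by simp [hsE])

end DoublingSegment

theorem globalLip_le_of_ae_pLip_lt [MeasurableSpace X] [BorelSpace X] [CompactSpace X]
    {υ : Measure X} [SFinite υ] [NeZero υ] {κ lam : ℝ} (hdoub : DoublingFor υ κ)
    (hseg : SegmentIneqFor υ lam) {f : X → ℝ} {K : ℝ≥0} (hf : LipschitzWith K f) {M : ℝ}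
    (hae : ∀ᵐ x ∂υ, pLip f x < M) : globalLip f ≤ M := by
  obtain ⟨x, hx⟩ := hae.exists
  have hM : 0 ≤ M := (pLip_nonneg f x).trans hx.le
  refine globalLip_le hM fun y z => ?_
  by_contra! hyz
  have := hdoub.isOpenPosMeasure
  set W : Set (X × X) := {p | M * dist p.1 p.2 < |f p.1 - f p.2|}
  have hW : IsOpen W := isOpen_lt (by fun_prop) (by have := hf.continuous; fun_prop)
  set E := toMeasurable υ {x | ¬ pLip f x < M}
  have hg0 : ∫⁻ x, E.indicator (fun _ => ∞) x ∂υ = 0 := by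
    rw [lintegral_indicator_const (measurableSet_toMeasurable _ _), measure_toMeasurable,
      ae_iff.1 hae, mul_zero]
  obtain ⟨p, hpW, hp⟩ := hseg.exists_segF_lt_top (measurable_const.indicator
    (measurableSet_toMeasurable _ _)) hg0 hW.measurableSet (hW.measure_ne_zero _ ⟨(y, z), hyz⟩)
  obtain ⟨γ, hγ, hnull⟩ :=
    exists_isMinGeodesic_of_segF_indicator_lt_top (measurableSet_toMeasurable _ _) hp
  have hE : ∀ x ∉ E, pLip f x < M := fun x hx => by_contra fun h => hx (subset_toMeasurable υ _ h)
  exact hpW.not_ge (hγ.abs_sub_le_of_null hf hM hE hnull)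

theorem stmt1_general {X : Type*} [MetricSpace X] [CompactSpace X] [MeasurableSpace X] [BorelSpace X]
    (υ : Measure X) [IsProbabilityMeasure υ]
    (κ : ℝ) (hdoub : DoublingFor υ κ)
    (lam : ℝ) (hseg : SegmentIneqFor υ lam)
    (f : X → ℝ) (hf : IsLipFun f) :
    globalLip f = essSup (fun x => pLip f x) υ := by
  obtain ⟨K, hK⟩ := hf
  have hbdd : IsBoundedUnder (· ≤ ·) (ae υ) (fun x => pLip f x) :=
    isBoundedUnder_of ⟨K, pLip_le hK⟩
  refine le_antisymm (le_of_forall_gt_imp_ge_of_dense fun M hM => ?_) ?_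
  · exact globalLip_le_of_ae_pLip_lt hdoub hseg hK (ae_lt_of_essSup_lt hM hbdd)
  · exact essSup_le_of_ae_le _ (.of_forall hK.pLip_le_globalLip)
      (isCoboundedUnder_le_of_le _ (pLip_nonneg f))

/-- the global Lipschitz constant equals the essential supremum of
the pointwise Lipschitz constant. -/
theorem stmt1 {X : Type*} [MetricSpace X] [CompactSpace X] [MeasurableSpace X] [BorelSpace X]
    (υ : Measure X) [IsProbabilityMeasure υ]
    (hgeo : IsGeodesicSpace X)
    (κ : ℝ) (hκ : 0 < κ) (hdoub : DoublingFor υ κ)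
    (lam : ℝ) (hlam : 0 < lam) (hseg : SegmentIneqFor υ lam)
    (f : X → ℝ) (hf : IsLipFun f) :
    globalLip f = essSup (fun x => pLip f x) υ :=
  stmt1_general υ κ hdoub lam hseg f hf
end

section
/- Let (X, υ) be a compact metric measure space and let 1 < p < ∞. Then λ_{1,p}(X) = inf { ∫_X (Lip f)^p dυ : f Lipschitz on X with c_p(f) = 1 and ∫_X |f|^p dυ = 1 }, where both infima are taken in (0, ∞] and equal ∞ when the corresponding set of competitors is empty. -/
/-!
If `∫ |f| ^ p = 1`, then `c_p(f) = 1` says exactly that `c = 0` minimizes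
`c ↦ ∫ |f - c| ^ p`. This function is convex (as `|·| ^ p` is) and differentiable with derivative
`-p ∫ |f - c| ^ (p - 2) (f - c)`, so `0` is a minimizer iff `∫ |f| ^ (p - 2) f = 0`. Hence both
infima run over the same competitors.
-/

open MeasureTheory Metric Filter Set
open scoped Topology NNReal ENNReal
open Classical

variable {X : Type*} [MetricSpace X]

theorem ConvexOn.add_mul_sub_le_of_hasDerivAt {S : Set ℝ} {f : ℝ → ℝ} {f' x y : ℝ}
    (hf : ConvexOn ℝ S f) (hx : x ∈ S) (hy : y ∈ S) (hf' : HasDerivAt f f' x) :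
    f x + f' * (y - x) ≤ f y := by
  rcases lt_trichotomy x y with hxy | rfl | hxy
  · have h := hf.le_slope_of_hasDerivAt hx hy hxy hf'
    rw [slope_def_field, le_div_iff₀ (sub_pos.2 hxy)] at h
    linarith
  · simp
  · have h := hf.slope_le_of_hasDerivAt hy hx hxy hf'
    rw [slope_def_field, div_le_iff₀ (sub_pos.2 hxy)] at h
    linarith

theorem convexOn_abs_rpow {p : ℝ} (hp : 1 ≤ p) : ConvexOn ℝ univ fun x : ℝ => |x| ^ p := by
  refine ⟨convex_univ, fun x _ y _ a b ha hb hab => ?_⟩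
  calc |a • x + b • y| ^ p ≤ (a • |x| + b • |y|) ^ p := by
        gcongr
        simpa [abs_of_nonneg ha, abs_of_nonneg hb] using abs_add_le (a * x) (b * y)
    _ ≤ a • |x| ^ p + b • |y| ^ p :=
        (convexOn_rpow hp).2 (abs_nonneg x) (abs_nonneg y) ha hb hab

theorem abs_rpow_add_mul_sub_le {p : ℝ} (hp : 1 < p) (a b : ℝ) :
    |a| ^ p + p * |a| ^ (p - 2) * a * (b - a) ≤ |b| ^ p :=
  (convexOn_abs_rpow hp.le).add_mul_sub_le_of_hasDerivAt (mem_univ a) (mem_univ b)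
    (hasDerivAt_abs_rpow a hp)

theorem abs_abs_rpow_sub_two_mul {p : ℝ} (hp : 1 < p) (t : ℝ) :
    |(|t| ^ (p - 2) * t)| = |t| ^ (p - 1) := by
  rcases eq_or_ne t 0 with rfl | ht
  · simp [Real.zero_rpow (sub_pos.2 hp).ne']
  · rw [abs_mul, abs_of_nonneg (by positivity), ← Real.rpow_add_one (abs_ne_zero.mpr ht)]
    ring_nf

section Deviation

variable {α : Type*} [MeasurableSpace α] {μ : Measure α} {f : α → ℝ}

theorem cP_eq_iff_forall_integral_abs_rpow_le {p : ℝ} (hp : 0 < p) :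
    cP μ p f = (∫ x, |f x| ^ p ∂μ) ^ (1 / p) ↔
      ∀ c, ∫ x, |f x| ^ p ∂μ ≤ ∫ x, |f x - c| ^ p ∂μ := by
  have hnonneg : ∀ c, 0 ≤ ∫ x, |f x - c| ^ p ∂μ := fun c => integral_nonneg fun x => by positivity
  have hbdd : BddBelow (range fun c => (∫ x, |f x - c| ^ p ∂μ) ^ (1 / p)) :=
    ⟨0, by rintro _ ⟨c, rfl⟩; positivity⟩
  have hmono : ∀ c, (∫ x, |f x| ^ p ∂μ) ^ (1 / p) ≤ (∫ x, |f x - c| ^ p ∂μ) ^ (1 / p) ↔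
      ∫ x, |f x| ^ p ∂μ ≤ ∫ x, |f x - c| ^ p ∂μ := fun c =>
    Real.rpow_le_rpow_iff (by simpa using hnonneg 0) (hnonneg c) (by positivity)
  unfold cP
  constructor
  · intro h c
    exact (hmono c).1 (h ▸ ciInf_le hbdd c)
  · intro h
    exact le_antisymm (by simpa using ciInf_le hbdd 0) (le_ciInf fun c => (hmono c).2 (h c))

variable [IsFiniteMeasure μ] {M : ℝ}

theorem integrable_abs_sub_rpow (hf : AEMeasurable f μ) (hM : ∀ x, |f x| ≤ M) {p : ℝ}
    (hp : 0 ≤ p) (c : ℝ) : Integrable (fun x => |f x - c| ^ p) μ := by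
  refine Integrable.of_bound (by fun_prop) ((M + |c|) ^ p) (Eventually.of_forall fun x => ?_)
  rw [Real.norm_of_nonneg (by positivity)]
  have : |f x - c| ≤ M + |c| := (abs_sub _ _).trans (by linarith [hM x])
  gcongr

theorem integrable_abs_rpow_sub_two_mul (hf : AEMeasurable f μ) (hM : ∀ x, |f x| ≤ M)
    {p : ℝ} (hp : 1 < p) : Integrable (fun x => |f x| ^ (p - 2) * f x) μ := by
  refine Integrable.of_bound (by fun_prop) (M ^ (p - 1)) (Eventually.of_forall fun x => ?_)
  rw [Real.norm_eq_abs, abs_abs_rpow_sub_two_mul hp]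
  gcongr
  exact hM x

theorem hasDerivAt_integral_abs_sub_rpow (hf : AEMeasurable f μ) (hM : ∀ x, |f x| ≤ M)
    {p : ℝ} (hp : 1 < p) (c₀ : ℝ) :
    HasDerivAt (fun c => ∫ x, |f x - c| ^ p ∂μ)
      (-(p * ∫ x, |f x - c₀| ^ (p - 2) * (f x - c₀) ∂μ)) c₀ := by
  have hbound : ∀ᵐ x ∂μ, ∀ c ∈ ball c₀ 1,
      ‖-(p * |f x - c| ^ (p - 2) * (f x - c))‖ ≤ p * (M + |c₀| + 1) ^ (p - 1) := by
    refine Eventually.of_forall fun x c hc => ?_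
    have hc : |c| ≤ |c₀| + 1 := by
      have := abs_sub_abs_le_abs_sub c c₀
      rw [Metric.mem_ball, Real.dist_eq] at hc
      linarith
    have : |f x - c| ≤ M + |c₀| + 1 := (abs_sub _ _).trans (by linarith [hM x])
    rw [norm_neg, mul_assoc, norm_mul, Real.norm_eq_abs, Real.norm_eq_abs,
      abs_abs_rpow_sub_two_mul hp, abs_of_pos (by linarith)]
    gcongr
  have hderiv : ∀ᵐ x ∂μ, ∀ c ∈ ball c₀ 1, HasDerivAt (fun c => |f x - c| ^ p)
      (-(p * |f x - c| ^ (p - 2) * (f x - c))) c :=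
    Eventually.of_forall fun x c _ =>
      ((hasDerivAt_abs_rpow (f x - c) hp).comp c ((hasDerivAt_id c).const_sub (f x))).congr_deriv
        (by ring)
  have h := hasDerivAt_integral_of_dominated_loc_of_deriv_le (ball_mem_nhds c₀ one_pos)
    (Eventually.of_forall fun c => (integrable_abs_sub_rpow hf hM (by linarith) c).1)
    (integrable_abs_sub_rpow hf hM (by linarith) c₀) (by fun_prop) hbound
    (integrable_const _) hderiv
  refine h.2.congr_deriv ?_
  simp only [integral_neg, ← integral_const_mul, mul_assoc]

theorem forall_integral_abs_rpow_le_iff (hf : AEMeasurable f μ) (hM : ∀ x, |f x| ≤ M)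
    {p : ℝ} (hp : 1 < p) :
    (∀ c, ∫ x, |f x| ^ p ∂μ ≤ ∫ x, |f x - c| ^ p ∂μ) ↔ ∫ x, |f x| ^ (p - 2) * f x ∂μ = 0 := by
  constructor
  · intro hmin
    have hlocal : IsLocalMin (fun c => ∫ x, |f x - c| ^ p ∂μ) 0 :=
      Eventually.of_forall fun c => by simpa using hmin c
    have := hlocal.hasDerivAt_eq_zero (hasDerivAt_integral_abs_sub_rpow hf hM hp 0)
    simpa [(by linarith : p ≠ 0)] using this
  · intro hcrit c
    have hpow : Integrable (fun x => |f x| ^ p) μ := by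
      simpa using integrable_abs_sub_rpow hf hM (p := p) (by linarith) 0
    have hmoment := (integrable_abs_rpow_sub_two_mul hf hM hp).const_mul (-c * p)
    have htangent : ∀ x, |f x| ^ p + (-c * p) * (|f x| ^ (p - 2) * f x) ≤ |f x - c| ^ p := by
      intro x
      have := abs_rpow_add_mul_sub_le hp (f x) (f x - c)
      linarith
    have hint : ∫ x, |f x| ^ p + (-c * p) * (|f x| ^ (p - 2) * f x) ∂μ ≤ ∫ x, |f x - c| ^ p ∂μ :=
      integral_mono (hpow.add hmoment) (integrable_abs_sub_rpow hf hM (by linarith) c) htangent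
    rwa [integral_add hpow hmoment, integral_const_mul, hcrit, mul_zero, add_zero] at hint

end Deviation

theorem IsLipFun.exists_abs_le [CompactSpace X] {f : X → ℝ} (hf : IsLipFun f) :
    ∃ M, ∀ x, |f x| ≤ M := by
  obtain ⟨K, hK⟩ := hf
  obtain ⟨M, hM⟩ := (isCompact_range hK.continuous).isBounded.exists_norm_le
  exact ⟨M, fun x => hM _ (mem_range_self x)⟩

theorem IsLipFun.integral_abs_rpow_sub_two_mul_eq_zero_iff [CompactSpace X] [MeasurableSpace X]
    [BorelSpace X] {υ : Measure X} [IsFiniteMeasure υ] {p : ℝ} (hp : 1 < p) {f : X → ℝ}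
    (hf : IsLipFun f) (hnorm : ∫ x, |f x| ^ p ∂υ = 1) :
    ∫ x, |f x| ^ (p - 2) * f x ∂υ = 0 ↔ cP υ p f = 1 := by
  obtain ⟨M, hM⟩ := hf.exists_abs_le
  obtain ⟨K, hK⟩ := hf
  rw [← forall_integral_abs_rpow_le_iff hK.continuous.measurable.aemeasurable hM hp,
    ← cP_eq_iff_forall_integral_abs_rpow_le (by linarith), hnorm, Real.one_rpow]

/-- alternative formulation of `λ_{1,p}(X)` via `c_p`. -/
theorem stmt2 {X : Type*} [MetricSpace X] [CompactSpace X] [MeasurableSpace X] [BorelSpace X]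
    (υ : Measure X) [IsProbabilityMeasure υ]
    (p : ℝ) (hp : 1 < p) :
    lambda1 υ p =
      ⨅ f ∈ {f : X → ℝ | IsLipFun f ∧ cP υ p f = 1 ∧ (∫ x, |f x| ^ p ∂υ) = 1},
        ENNReal.ofReal (∫ x, (pLip f x) ^ p ∂υ) := by
  have hcompetitors : {f : X → ℝ | IsLipFun f ∧ (∫ x, |f x| ^ p ∂υ) = 1 ∧
      (∫ x, |f x| ^ (p - 2) * f x ∂υ) = 0} =
      {f : X → ℝ | IsLipFun f ∧ cP υ p f = 1 ∧ (∫ x, |f x| ^ p ∂υ) = 1} := by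
    ext f
    refine and_congr_right fun hf => ?_
    rw [and_comm]
    exact and_congr_left (hf.integral_abs_rpow_sub_two_mul_eq_zero_iff hp)
  rw [lambda1, hcompetitors]
end

section
/- Let (X, υ) be a compact metric measure space, let 1 < p < ∞, let f_i → f_∞ in L^p(X, υ), and let {p_i} be a sequence in [1, p] converging to p_∞ ∈ [1, p]. Then c_{p_i}(f_i) → c_{p_∞}(f_∞) as i → ∞. -/
open MeasureTheory Metric Filter Set
open scoped Topology NNReal ENNReal
open Classical

variable {X : Type*} [MetricSpace X]

/-!
Minkowski's inequality for `g - c = (h - c) + (g - h)`, for each constant `c`, together with the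
monotonicity of `q ↦ ‖·‖_q` on a probability space, gives
`|c_q(g) - c_q(h)| ≤ ‖g - h‖_q ≤ ‖g - h‖_p` for `q ≤ p`. This reduces the claim to the continuity
of `q ↦ c_q(f_∞)` on `[1, p]`. For that, the infimum defining `c_q(g)` may be taken over constants
in `[-R, R]` with `R = 2‖g‖_p` only, and `(q, c) ↦ ‖g - c‖_q` is jointly continuous by dominated
convergence; an infimum over a compact set of a jointly continuous function depends continuously
on the parameter.
-/
lemma ciInf_le_ciInf_add {ι : Type*} [Nonempty ι] {F G : ι → ℝ} {δ : ℝ}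
    (hF : BddBelow (range F)) (h : ∀ i, F i ≤ G i + δ) : ⨅ i, F i ≤ (⨅ i, G i) + δ := by
  have : ∀ i, (⨅ i, F i) - δ ≤ G i := fun i => by linarith [ciInf_le hF i, h i]
  linarith [le_ciInf this]

lemma Real.rpow_le_one_add_rpow {x q p : ℝ} (hx : 0 ≤ x) (hq : 0 ≤ q) (hqp : q ≤ p) :
    x ^ q ≤ 1 + x ^ p := by
  rcases le_or_gt x 1 with hx1 | hx1
  · linarith [Real.rpow_le_one hx hx1 hq, Real.rpow_nonneg hx p]
  · linarith [Real.rpow_le_rpow_of_exponent_le hx1.le hqp]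

section lpNorm

variable {α : Type*} [MeasurableSpace α] {μ : Measure α} {g : α → ℝ}

lemma integral_abs_rpow_rpow_one_div_eq_lpNorm {q : ℝ} (hq : 0 < q)
    (hg : AEStronglyMeasurable g μ) :
    (∫ x, |g x| ^ q ∂μ) ^ (1 / q) = lpNorm g (ENNReal.ofReal q) μ := by
  rw [lpNorm_eq_integral_norm_rpow_toReal (by simpa using hq) ENNReal.ofReal_ne_top hg,
    ENNReal.toReal_ofReal hq.le, one_div]
  rfl

lemma lpNorm_le_lpNorm_of_exponent_le [IsProbabilityMeasure μ] {E : Type*} [NormedAddCommGroup E]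
    {f : α → E} {r s : ENNReal} (hrs : r ≤ s) (hf : MemLp f s μ) :
    lpNorm f r μ ≤ lpNorm f s μ := by
  rw [← toReal_eLpNorm hf.aestronglyMeasurable, ← toReal_eLpNorm hf.aestronglyMeasurable]
  exact ENNReal.toReal_mono hf.eLpNorm_ne_top
    (eLpNorm_le_eLpNorm_of_exponent_le hrs hf.aestronglyMeasurable)

lemma abs_sub_lpNorm_le_lpNorm_sub_const [IsProbabilityMeasure μ] {r : ENNReal} (hr : 1 ≤ r)
    (hg : MemLp g r μ) (c : ℝ) :
    |c| - lpNorm g r μ ≤ lpNorm (fun x => g x - c) r μ := by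
  have h := lpNorm_le_lpNorm_add_lpNorm_sub (f := fun _ => c) hg hr
  rw [lpNorm_const (zero_lt_one.trans_le hr).ne' (IsProbabilityMeasure.ne_zero μ)] at h
  simp only [probReal_univ, Real.one_rpow, mul_one, Real.norm_eq_abs] at h
  change |c| ≤ lpNorm g r μ + lpNorm (fun x => g x - c) r μ at h
  linarith

end lpNorm

section cP

variable {α : Type*} [MeasurableSpace α] {μ : Measure α} {g h : α → ℝ} {q : ℝ}

lemma cP_eq_iInf_lpNorm (hq : 0 < q) (hg : AEStronglyMeasurable g μ) :
    cP μ q g = ⨅ c : ℝ, lpNorm (fun x => g x - c) (ENNReal.ofReal q) μ :=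
  iInf_congr fun _ =>
    integral_abs_rpow_rpow_one_div_eq_lpNorm hq (hg.sub aestronglyMeasurable_const)

lemma cP_le_cP_add_lpNorm_sub (hq : 1 ≤ q) (hg : MemLp g (ENNReal.ofReal q) μ)
    (hh : MemLp h (ENNReal.ofReal q) μ) :
    cP μ q g ≤ cP μ q h + lpNorm (g - h) (ENNReal.ofReal q) μ := by
  have hq0 : 0 < q := zero_lt_one.trans_le hq
  rw [cP_eq_iInf_lpNorm hq0 hg.aestronglyMeasurable, cP_eq_iInf_lpNorm hq0 hh.aestronglyMeasurable]
  refine ciInf_le_ciInf_add ⟨0, by rintro _ ⟨c, rfl⟩; exact lpNorm_nonneg⟩ fun c => ?_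
  rw [add_comm]
  exact lpNorm_sub_le_lpNorm_sub_add_lpNorm_sub (h := fun _ => c) hg hh
    (ENNReal.one_le_ofReal.2 hq)

lemma abs_cP_sub_cP_le (hq : 1 ≤ q) (hg : MemLp g (ENNReal.ofReal q) μ)
    (hh : MemLp h (ENNReal.ofReal q) μ) :
    |cP μ q g - cP μ q h| ≤ lpNorm (g - h) (ENNReal.ofReal q) μ := by
  rw [abs_sub_le_iff]
  constructor
  · linarith [cP_le_cP_add_lpNorm_sub hq hg hh]
  · linarith [cP_le_cP_add_lpNorm_sub hq hh hg, lpNorm_sub_comm h g (ENNReal.ofReal q) μ]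

lemma cP_eq_sInf_image_Icc [IsProbabilityMeasure μ] (hq : 1 ≤ q)
    (hg : MemLp g (ENNReal.ofReal q) μ) {R : ℝ} (hR : 2 * lpNorm g (ENNReal.ofReal q) μ ≤ R) :
    cP μ q g = sInf ((fun c => lpNorm (fun x => g x - c) (ENNReal.ofReal q) μ) '' Icc (-R) R) := by
  set F := fun c : ℝ => lpNorm (fun x => g x - c) (ENNReal.ofReal q) μ
  have hR0 : 0 ≤ R := le_trans (mul_nonneg zero_le_two lpNorm_nonneg) hR
  have h0 : (0 : ℝ) ∈ Icc (-R) R := ⟨by linarith, hR0⟩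
  have hbdd : BddBelow (range fun c : Icc (-R) R => F c) :=
    ⟨0, by rintro _ ⟨c, rfl⟩; exact lpNorm_nonneg⟩
  have : Nonempty (Icc (-R) R) := ⟨⟨0, h0⟩⟩
  rw [cP_eq_iInf_lpNorm (zero_lt_one.trans_le hq) hg.aestronglyMeasurable, sInf_image']
  refine le_antisymm (le_ciInf fun c => ciInf_le ⟨0, ?_⟩ _) (le_ciInf fun c => ?_)
  · rintro _ ⟨c, rfl⟩; exact lpNorm_nonneg
  by_cases hc : c ∈ Icc (-R) R
  · exact ciInf_le hbdd ⟨c, hc⟩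
  have hcR : R < |c| := by
    rw [mem_Icc, ← abs_le] at hc
    exact not_le.1 hc
  calc ⨅ c : Icc (-R) R, F c ≤ F 0 := ciInf_le hbdd ⟨0, h0⟩
    _ = lpNorm g (ENNReal.ofReal q) μ := by simp only [F, sub_zero]
    _ ≤ F c := by
      linarith [abs_sub_lpNorm_le_lpNorm_sub_const (ENNReal.one_le_ofReal.2 hq) hg c]

end cP

section continuity

variable {α : Type*} [MeasurableSpace α] {μ : Measure α} {g : α → ℝ} {p : ℝ}

lemma continuousOn_integral_abs_sub_rpow [IsFiniteMeasure μ] (hg : MemLp g (ENNReal.ofReal p) μ) :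
    ContinuousOn (fun qc : ℝ × ℝ => ∫ x, |g x - qc.2| ^ qc.1 ∂μ) (Ioc 0 p ×ˢ univ) := by
  rintro ⟨q₀, c₀⟩ ⟨hq₀, -⟩
  have hp : 0 < p := hq₀.1.trans_le hq₀.2
  refine continuousWithinAt_of_dominated (bound := fun x => 1 + (|g x| + (|c₀| + 1)) ^ p)
    (Eventually.of_forall fun qc => ?_) ?_ ?_ (Eventually.of_forall fun x => ?_)
  · exact ((hg.1.aemeasurable.sub_const _).abs.pow_const _).aestronglyMeasurable
  · filter_upwards [inter_mem_nhdsWithin _ (Metric.ball_mem_nhds (q₀, c₀) one_pos)]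
      with ⟨q, c⟩ hqc
    obtain ⟨⟨⟨hq, hqp⟩, -⟩, hqc⟩ := hqc
    have hc : |c - c₀| < 1 := by
      rw [Metric.mem_ball, Prod.dist_eq, Real.dist_eq, Real.dist_eq] at hqc
      exact (le_max_right _ _).trans_lt hqc
    refine Eventually.of_forall fun x => ?_
    rw [Real.norm_of_nonneg (by positivity)]
    calc |g x - c| ^ q ≤ 1 + |g x - c| ^ p := Real.rpow_le_one_add_rpow (abs_nonneg _) hq.le hqp
      _ ≤ 1 + (|g x| + (|c₀| + 1)) ^ p := by
        gcongr
        calc |g x - c| ≤ |g x| + |c| := abs_sub _ _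
          _ ≤ |g x| + (|c₀| + 1) := by linarith [abs_sub_abs_le_abs_sub c c₀]
  · refine (integrable_const 1).add ?_
    have := (hg.norm.add (memLp_const (|c₀| + 1))).integrable_norm_rpow
      (by simpa using hp) ENNReal.ofReal_ne_top
    simp only [ENNReal.toReal_ofReal hp.le] at this
    refine this.congr (Eventually.of_forall fun x => ?_)
    simp only [Pi.add_apply, Real.norm_eq_abs]
    rw [abs_of_nonneg (by positivity)]
  · exact (ContinuousAt.rpow (by fun_prop) (by fun_prop) (Or.inr hq₀.1)).continuousWithinAt

lemma continuousOn_lpNorm_sub_const [IsFiniteMeasure μ] (hg : MemLp g (ENNReal.ofReal p) μ) :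
    ContinuousOn (fun qc : ℝ × ℝ => lpNorm (fun x => g x - qc.2) (ENNReal.ofReal qc.1) μ)
      (Ioc 0 p ×ˢ univ) := by
  refine ((continuousOn_integral_abs_sub_rpow hg).rpow
    (continuousOn_const.div continuousOn_fst fun qc hqc => hqc.1.1.ne')
    fun qc hqc => Or.inr (one_div_pos.2 hqc.1.1)).congr fun qc hqc => ?_
  exact (integral_abs_rpow_rpow_one_div_eq_lpNorm hqc.1.1 (hg.1.sub aestronglyMeasurable_const)).symm

lemma continuousOn_cP [IsProbabilityMeasure μ] (hg : MemLp g (ENNReal.ofReal p) μ) :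
    ContinuousOn (fun q => cP μ q g) (Icc 1 p) := by
  set R := 2 * lpNorm g (ENNReal.ofReal p) μ
  have hcont : Continuous fun q : Icc 1 p =>
      sInf ((fun c => lpNorm (fun x => g x - c) (ENNReal.ofReal q) μ) '' Icc (-R) R) :=
    isCompact_Icc.continuous_sInf ((continuousOn_lpNorm_sub_const hg).comp_continuous
      (f := fun qc : Icc 1 p × ℝ => ((qc.1 : ℝ), qc.2)) (by fun_prop)
      fun qc => ⟨⟨zero_lt_one.trans_le qc.1.2.1, qc.1.2.2⟩, mem_univ _⟩)
  rw [continuousOn_iff_continuous_domRestrict]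
  refine hcont.congr fun q => (cP_eq_sInf_image_Icc q.2.1 ?_ ?_).symm
  · exact hg.mono_exponent (ENNReal.ofReal_le_ofReal q.2.2)
  · exact mul_le_mul_of_nonneg_left
      (lpNorm_le_lpNorm_of_exponent_le (ENNReal.ofReal_le_ofReal q.2.2) hg) zero_le_two

end continuity

theorem stmt17_general {X : Type*} [MeasurableSpace X]
    (υ : Measure X) [IsProbabilityMeasure υ]
    (p : ℝ)
    (f : ℕ → X → ℝ) (flim : X → ℝ)
    (hf : ∀ i, MemLp (f i) (ENNReal.ofReal p) υ) (hflim : MemLp flim (ENNReal.ofReal p) υ)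
    (hconv : Filter.Tendsto (fun i => (∫ x, |f i x - flim x| ^ p ∂υ) ^ (1/p))
      Filter.atTop (𝓝 0))
    (ps : ℕ → ℝ) (hps : ∀ i, ps i ∈ Icc (1:ℝ) p)
    (plim : ℝ) (hplim : plim ∈ Icc (1:ℝ) p)
    (hpstend : Filter.Tendsto ps Filter.atTop (𝓝 plim)) :
    Filter.Tendsto (fun i => cP υ (ps i) (f i)) Filter.atTop (𝓝 (cP υ plim flim)) := by
  have hp : 0 < p := zero_lt_one.trans_le (hplim.1.trans hplim.2)
  have hclose : ∀ i, ‖cP υ (ps i) (f i) - cP υ (ps i) flim‖ ≤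
      (∫ x, |f i x - flim x| ^ p ∂υ) ^ (1/p) := fun i => by
    have hpi := ENNReal.ofReal_le_ofReal (hps i).2
    calc ‖cP υ (ps i) (f i) - cP υ (ps i) flim‖
        ≤ lpNorm (f i - flim) (ENNReal.ofReal (ps i)) υ :=
          abs_cP_sub_cP_le (hps i).1 ((hf i).mono_exponent hpi) (hflim.mono_exponent hpi)
      _ ≤ lpNorm (f i - flim) (ENNReal.ofReal p) υ :=
          lpNorm_le_lpNorm_of_exponent_le hpi ((hf i).sub hflim)
      _ = (∫ x, |f i x - flim x| ^ p ∂υ) ^ (1/p) :=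
          (integral_abs_rpow_rpow_one_div_eq_lpNorm hp ((hf i).1.sub hflim.1)).symm
  have hflim_cP : Tendsto (fun i => cP υ (ps i) flim) atTop (𝓝 (cP υ plim flim)) :=
    ((continuousOn_cP hflim) plim hplim).tendsto.comp
      (tendsto_nhdsWithin_iff.2 ⟨hpstend, Eventually.of_forall hps⟩)
  simpa using (squeeze_zero_norm hclose hconv).add hflim_cP

/-- continuity of `c_p` under `L^p`-convergence and varying exponents. -/
theorem stmt17 {X : Type*} [MetricSpace X] [CompactSpace X] [MeasurableSpace X] [BorelSpace X]
    (υ : Measure X) [IsProbabilityMeasure υ]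
    (p : ℝ) (hp : 1 < p)
    (f : ℕ → X → ℝ) (flim : X → ℝ)
    (hf : ∀ i, MemLp (f i) (ENNReal.ofReal p) υ) (hflim : MemLp flim (ENNReal.ofReal p) υ)
    (hconv : Filter.Tendsto (fun i => (∫ x, |f i x - flim x| ^ p ∂υ) ^ (1/p))
      Filter.atTop (𝓝 0))
    (ps : ℕ → ℝ) (hps : ∀ i, ps i ∈ Icc (1:ℝ) p)
    (plim : ℝ) (hplim : plim ∈ Icc (1:ℝ) p)
    (hpstend : Filter.Tendsto ps Filter.atTop (𝓝 plim)) :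
    Filter.Tendsto (fun i => cP υ (ps i) (f i)) Filter.atTop (𝓝 (cP υ plim flim)) :=
  stmt17_general υ p f flim hf hflim hconv ps hps plim hplim hpstend
end
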